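/- Let X : ℝ → [0,∞) be continuous with X(0) = 0 and X(t) → ∞ as |t| → ∞, and let d_X be the associated pseudometric on ℝ (as for the self-similar CRT). For r ≥ 0, set Γ₊(r) = sup{t ≥ 0 : X(t) = r} and Γ₋(r) = inf{t ≤ 0 : X(t) = r}. Then for all r, r' ≥ 0: d_X(Γ₊(r), Γ₊(r')) = |r - r'|, d_X(Γ₋(r), Γ₋(r')) = |r - r'|, and d_X(Γ₊(r), Γ₋(r)) = 0. In particular, r ↦ [Γ₊(r)] is a geodesic ray from the root in the quotient tree. -/

import Mathlib

open Set Filter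

/-- `č(s,t)` for the self-similar CRT pseudometric. -/
noncomputable def crtCheck (X : ℝ → ℝ) (s t : ℝ) : ℝ :=
  if 0 ≤ s * t then sInf (X '' Set.uIcc s t)
  else sInf (X '' (Set.Ioo (min s t) (max s t))ᶜ)

/-- The self-similar CRT pseudometric `d_X(s,t) = X s + X t - 2 č(s,t)`. -/
noncomputable def crtDist (X : ℝ → ℝ) (s t : ℝ) : ℝ :=
  X s + X t - 2 * crtCheck X s t

/-- `Γ₊(r) = sup {t ≥ 0 : X t = r}`, the last hitting time of level `r` on the
positive half-line. -/
noncomputable def GammaPlus (X : ℝ → ℝ) (r : ℝ) : ℝ :=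
  sSup {t : ℝ | 0 ≤ t ∧ X t = r}

/-- `Γ₋(r) = inf {t ≤ 0 : X t = r}`, the first hitting time of level `r` on the
negative half-line. -/
noncomputable def GammaMinus (X : ℝ → ℝ) (r : ℝ) : ℝ :=
  sInf {t : ℝ | t ≤ 0 ∧ X t = r}

/-!
`X` stays above `r` after `Γ₊(r)` and before `Γ₋(r)`, and takes the value `r` at both times.
So for `r ≤ r'` the infimum defining `č(Γ₊ r, Γ₊ r')` over `[Γ₊ r, Γ₊ r']` is attained at
`Γ₊ r`, giving `d_X = r + r' - 2r`; and the infimum defining `č(Γ₊ r, Γ₋ r)` over the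
complement of `(Γ₋ r, Γ₊ r)` is attained at `Γ₊ r`, giving `d_X = r + r - 2r = 0`.
The negative half-line reduces to the positive one through `t ↦ X (-t)`.
-/

lemma IsMinOn.csInf_image_eq {α β : Type*} [ConditionallyCompleteLattice β] {f : α → β}
    {s : Set α} {p : α} (hp : p ∈ s) (h : IsMinOn f s p) : sInf (f '' s) = f p :=
  IsLeast.csInf_eq ⟨mem_image_of_mem f hp, forall_mem_image.2 h⟩

lemma crtCheck_comm (X : ℝ → ℝ) (s t : ℝ) : crtCheck X s t = crtCheck X t s := by
  rw [crtCheck, crtCheck, mul_comm, uIcc_comm, min_comm, max_comm]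

lemma crtDist_comm (X : ℝ → ℝ) (s t : ℝ) : crtDist X s t = crtDist X t s := by
  rw [crtDist, crtDist, crtCheck_comm]; ring

lemma crtCheck_neg (X : ℝ → ℝ) (s t : ℝ) :
    crtCheck X (-s) (-t) = crtCheck (fun u => X (-u)) s t := by
  have himage : ∀ A : Set ℝ, X '' (-A) = (fun u => X (-u)) '' A := fun A => by
    rw [← image_neg_eq_neg, image_image]
  rw [crtCheck, crtCheck, neg_mul_neg, ← neg_uIcc, min_neg_neg, max_neg_neg, ← neg_Ioo,
    ← compl_neg, himage, himage]

lemma crtDist_neg (X : ℝ → ℝ) (s t : ℝ) :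
    crtDist X (-s) (-t) = crtDist (fun u => X (-u)) s t := by
  rw [crtDist, crtDist, crtCheck_neg]

lemma gammaMinus_eq_neg_gammaPlus (X : ℝ → ℝ) (r : ℝ) :
    GammaMinus X r = -GammaPlus (fun t => X (-t)) r := by
  have hset : -{t : ℝ | t ≤ 0 ∧ X t = r} = {t : ℝ | 0 ≤ t ∧ X (-t) = r} := by
    ext t
    simp
  rw [GammaMinus, GammaPlus, Real.sInf_def, hset]

section LastHittingTime

variable {X : ℝ → ℝ} {r : ℝ}

lemma exists_ge_apply_eq_of_apply_le (hcont : Continuous X) (htop : Tendsto X atTop atTop)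
    {t : ℝ} (ht : X t ≤ r) : ∃ c, t ≤ c ∧ X c = r := by
  obtain ⟨a, ha⟩ := (htop.eventually_ge_atTop r).exists_forall_of_atTop
  obtain ⟨c, hc, hXc⟩ := intermediate_value_Icc (le_max_left t a) hcont.continuousOn
    ⟨ht, ha _ (le_max_right t a)⟩
  exact ⟨c, hc.1, hXc⟩

lemma isGreatest_gammaPlus (hcont : Continuous X) (htop : Tendsto X atTop atTop)
    (hr : X 0 ≤ r) : IsGreatest {t | 0 ≤ t ∧ X t = r} (GammaPlus X r) := by
  have hclosed : IsClosed {t | 0 ≤ t ∧ X t = r} :=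
    isClosed_Ici.inter (isClosed_singleton.preimage hcont)
  have hne : {t | 0 ≤ t ∧ X t = r}.Nonempty := exists_ge_apply_eq_of_apply_le hcont htop hr
  have hbdd : BddAbove {t | 0 ≤ t ∧ X t = r} := by
    obtain ⟨b, hb⟩ := (htop.eventually_gt_atTop r).exists_forall_of_atTop
    exact ⟨b, fun t ht => not_lt.1 fun hbt => (hb t hbt.le).ne' ht.2⟩
  exact ⟨hclosed.csSup_mem hne hbdd, fun t ht => le_csSup hbdd ht⟩

lemma lt_apply_of_gammaPlus_lt (hcont : Continuous X) (htop : Tendsto X atTop atTop)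
    (hr : X 0 ≤ r) {t : ℝ} (ht : GammaPlus X r < t) : r < X t := by
  by_contra! hXt
  obtain ⟨c, htc, hXc⟩ := exists_ge_apply_eq_of_apply_le hcont htop hXt
  have hΓ := isGreatest_gammaPlus hcont htop hr
  exact (ht.trans_le htc).not_ge (hΓ.2 ⟨hΓ.1.1.trans (ht.le.trans htc), hXc⟩)

lemma le_apply_of_gammaPlus_le (hcont : Continuous X) (htop : Tendsto X atTop atTop)
    (hr : X 0 ≤ r) {t : ℝ} (ht : GammaPlus X r ≤ t) : r ≤ X t := by
  rcases ht.eq_or_lt with rfl | hlt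
  · exact (isGreatest_gammaPlus hcont htop hr).1.2.ge
  · exact (lt_apply_of_gammaPlus_lt hcont htop hr hlt).le

lemma gammaPlus_le_gammaPlus (hcont : Continuous X) (htop : Tendsto X atTop atTop)
    {r' : ℝ} (hr : X 0 ≤ r) (hrr' : r ≤ r') : GammaPlus X r ≤ GammaPlus X r' := by
  by_contra! hlt
  have hXΓ := (isGreatest_gammaPlus hcont htop hr).1.2
  exact (lt_apply_of_gammaPlus_lt hcont htop (hr.trans hrr') hlt).not_ge (hXΓ.symm ▸ hrr')

lemma crtDist_gammaPlus_of_le (hcont : Continuous X) (htop : Tendsto X atTop atTop)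
    {r' : ℝ} (hr : X 0 ≤ r) (hrr' : r ≤ r') :
    crtDist X (GammaPlus X r) (GammaPlus X r') = r' - r := by
  obtain ⟨⟨hΓ_nonneg, hXΓ⟩, -⟩ := isGreatest_gammaPlus hcont htop hr
  obtain ⟨⟨hΓ'_nonneg, hXΓ'⟩, -⟩ := isGreatest_gammaPlus hcont htop (hr.trans hrr')
  have hle := gammaPlus_le_gammaPlus hcont htop hr hrr'
  have hmin : IsMinOn X (Icc (GammaPlus X r) (GammaPlus X r')) (GammaPlus X r) :=
    isMinOn_iff.2 fun u hu => hXΓ.symm ▸ le_apply_of_gammaPlus_le hcont htop hr hu.1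
  rw [crtDist, crtCheck, if_pos (mul_nonneg hΓ_nonneg hΓ'_nonneg), uIcc_of_le hle,
    hmin.csInf_image_eq (left_mem_Icc.2 hle), hXΓ, hXΓ']
  ring

lemma crtDist_gammaPlus (hcont : Continuous X) (htop : Tendsto X atTop atTop)
    {r' : ℝ} (hr : X 0 ≤ r) (hr' : X 0 ≤ r') :
    crtDist X (GammaPlus X r) (GammaPlus X r') = |r - r'| := by
  rcases le_total r r' with h | h
  · rw [crtDist_gammaPlus_of_le hcont htop hr h, abs_of_nonpos (sub_nonpos.2 h), neg_sub]
  · rw [crtDist_comm, crtDist_gammaPlus_of_le hcont htop hr' h, abs_of_nonneg (sub_nonneg.2 h)]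

end LastHittingTime

section FirstHittingTime

variable {X : ℝ → ℝ} {r : ℝ}

lemma tendsto_comp_neg_atTop (hbot : Tendsto X atBot atTop) :
    Tendsto (fun t => X (-t)) atTop atTop :=
  hbot.comp tendsto_neg_atTop_atBot

lemma crtDist_gammaMinus (hcont : Continuous X) (hbot : Tendsto X atBot atTop)
    {r' : ℝ} (hr : X 0 ≤ r) (hr' : X 0 ≤ r') :
    crtDist X (GammaMinus X r) (GammaMinus X r') = |r - r'| := by
  rw [gammaMinus_eq_neg_gammaPlus, gammaMinus_eq_neg_gammaPlus, crtDist_neg]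
  exact crtDist_gammaPlus (hcont.comp' continuous_neg) (tendsto_comp_neg_atTop hbot)
    (by simpa using hr) (by simpa using hr')

lemma gammaMinus_mem (hcont : Continuous X) (hbot : Tendsto X atBot atTop)
    (hr : X 0 ≤ r) : GammaMinus X r ∈ {t | t ≤ 0 ∧ X t = r} := by
  obtain ⟨hnonneg, hX⟩ := (isGreatest_gammaPlus (hcont.comp' continuous_neg)
    (tendsto_comp_neg_atTop hbot) (by simpa using hr)).1
  rw [gammaMinus_eq_neg_gammaPlus]
  exact ⟨neg_nonpos.2 hnonneg, by simpa using hX⟩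

lemma le_apply_of_le_gammaMinus (hcont : Continuous X) (hbot : Tendsto X atBot atTop)
    (hr : X 0 ≤ r) {t : ℝ} (ht : t ≤ GammaMinus X r) : r ≤ X t := by
  rw [gammaMinus_eq_neg_gammaPlus, le_neg] at ht
  simpa using le_apply_of_gammaPlus_le (hcont.comp' continuous_neg)
    (tendsto_comp_neg_atTop hbot) (by simpa using hr) ht

end FirstHittingTime

lemma crtDist_gammaPlus_gammaMinus {X : ℝ → ℝ} (hcont : Continuous X)
    (htop : Tendsto X atTop atTop) (hbot : Tendsto X atBot atTop) (hmin : ∀ t, X 0 ≤ X t)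
    {r : ℝ} (hr : X 0 ≤ r) : crtDist X (GammaPlus X r) (GammaMinus X r) = 0 := by
  obtain ⟨⟨hp, hXp⟩, -⟩ := isGreatest_gammaPlus hcont htop hr
  obtain ⟨hm, hXm⟩ := gammaMinus_mem hcont hbot hr
  set p := GammaPlus X r
  set m := GammaMinus X r
  suffices hcheck : crtCheck X p m = r by rw [crtDist, hcheck, hXp, hXm]; ring
  rw [crtCheck]
  split_ifs with hsign
  · -- `p * m = 0`, so one of the two times is `0` and `r = X 0` is the minimum of `X`
    have hr0 : r = X 0 := by
      rcases mul_eq_zero.1 (hsign.antisymm' (mul_nonpos_of_nonneg_of_nonpos hp hm)) with h | h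
      · rw [← hXp, h]
      · rw [← hXm, h]
    rw [hr0]
    exact IsMinOn.csInf_image_eq (mem_uIcc.2 (Or.inr ⟨hm, hp⟩)) fun t _ => hmin t
  · rw [min_eq_right (hm.trans hp), max_eq_left (hm.trans hp)]
    have hbelow : IsMinOn X (Ioo m p)ᶜ p := isMinOn_iff.2 fun u hu => by
      rw [mem_compl_iff, mem_Ioo, not_and_or, not_lt, not_lt] at hu
      rw [hXp]
      rcases hu with hu | hu
      · exact le_apply_of_le_gammaMinus hcont hbot hr hu
      · exact le_apply_of_gammaPlus_le hcont htop hr hu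
    rw [hbelow.csInf_image_eq (by simp), hXp]

/-- the maps `r ↦ Γ₊(r)` and `r ↦ Γ₋(r)` project to the same
geodesic ray from the root in the tree coded by `X`:
`d_X(Γ₊(r),Γ₊(r')) = d_X(Γ₋(r),Γ₋(r')) = |r - r'|` and `d_X(Γ₊(r),Γ₋(r)) = 0`. -/
theorem crt_spine_geodesic (X : ℝ → ℝ)
    (hcont : Continuous X) (hnonneg : ∀ t, 0 ≤ X t) (h0 : X 0 = 0)
    (hdiv : Tendsto X (cocompact ℝ) atTop) :
    ∀ r r' : ℝ, 0 ≤ r → 0 ≤ r' →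
      crtDist X (GammaPlus X r) (GammaPlus X r') = |r - r'| ∧
      crtDist X (GammaMinus X r) (GammaMinus X r') = |r - r'| ∧
      crtDist X (GammaPlus X r) (GammaMinus X r) = 0 := by
  rw [cocompact_eq_atBot_atTop, tendsto_sup] at hdiv
  obtain ⟨hbot, htop⟩ := hdiv
  intro r r' hr hr'
  rw [← h0] at hr hr'
  exact ⟨crtDist_gammaPlus hcont htop hr hr', crtDist_gammaMinus hcont hbot hr hr',
    crtDist_gammaPlus_gammaMinus hcont htop hbot (fun t => h0.symm ▸ hnonneg t) hr⟩
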